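/- arXiv:1703.03238 — 2 statements merged into one kernel-verified Lean document; each statement's English description precedes it below -/
import Mathlib

section
/- Suppose D satisfies Conditions (A) and (B), U is a penalty function for D with constant L, w : [0,T] → ℝ^d is α-Hölder continuous with w₀ = 0, x₀ ∈ D̄, and m ≥ 1 is an integer with 0 < ε_m^α(w) < r₀/2. Let m' ≥ m be an integer and set ξ̃^{m'}_t := ξ^{m'}_{t/m'} for t ∈ [0, m'T]. If u ∈ (0, m'T) satisfies dist(ξ̃^{m'}_u, D̄) = ε_m^α(w)/2, then after time u the path ξ̃^{m'} hits {x : dist(x, D̄) = ε_m^α(w)/3} before hitting {x : dist(x, D̄) = ε_m^α(w)}; precisely, for every t ∈ [u, m'T], if dist(ξ̃^{m'}_s, D̄) ≠ ε_m^α(w)/3 for all s ∈ [u, t], then dist(ξ̃^{m'}_t, D̄) < ε_m^α(w). -/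
/-!
Pass to the original time scale `τ = t / m'` and suppose the path reaches distance `ε` from `D̄`
after `u / m'`; let `σ` be the first such time and `[a, σ]` the window of length at most `1 / m'`
starting at `max (u / m') (σ - 1 / m')`. On the window the path stays within `ε < r₀ / 2` of `D̄`,
where `U = dist²` and hence `‖∇U‖² = 4 U`, so the noiseless gradient flow `η` started at `ξ a`
contracts the distance: `dist (η σ) ≤ dist (ξ a) e^{-m' (σ - a)} ≤ ε / 2`, either because
`dist (ξ a) = ε / 2` or because the window has full length and `e⁻¹ < 1 / 2`. Grönwall's inequality
bounds `‖ξ σ - η σ‖` by `‖w‖_α m'^{-α} e^L ≤ ε / 12`, so `dist (ξ σ) < ε`, a contradiction.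
-/

open Set Metric MeasureTheory Filter

noncomputable section

abbrev Euc (d : ℕ) := EuclideanSpace ℝ (Fin d)

/-- The set 𝒩_{x,r} of inward unit normals at `x` with radius `r`. -/
def nset {d : ℕ} (D : Set (Euc d)) (x : Euc d) (r : ℝ) : Set (Euc d) :=
  {n : Euc d | ‖n‖ = 1 ∧ Metric.ball (x - r • n) r ∩ D = ∅}

/-- The set 𝒩_x = ⋃_{r>0} 𝒩_{x,r}. -/
def nsetAll {d : ℕ} (D : Set (Euc d)) (x : Euc d) : Set (Euc d) :=
  ⋃ r ∈ Set.Ioi (0 : ℝ), nset D x r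

/-- Condition (A): uniform exterior sphere condition with radius `r₀`. -/
def CondA {d : ℕ} (D : Set (Euc d)) (r₀ : ℝ) : Prop :=
  0 < r₀ ∧ ∀ x ∈ frontier D, nsetAll D x = nset D x r₀ ∧ (nset D x r₀).Nonempty

/-- Condition (B): local uniform interior cone-type condition with constants `δ`, `β`. -/
def CondB {d : ℕ} (D : Set (Euc d)) (δ β : ℝ) : Prop :=
  0 < δ ∧ 1 ≤ β ∧ ∀ x ∈ frontier D, ∃ l : Euc d, ‖l‖ = 1 ∧
    ∀ y ∈ Metric.ball x δ ∩ frontier D, ∀ n ∈ nsetAll D y, (1 / β : ℝ) ≤ inner ℝ l n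

/-- A penalty function `U` for `D` with constant `L`. -/
def IsPenalty {d : ℕ} (D : Set (Euc d)) (r₀ L : ℝ) (U : Euc d → ℝ) : Prop :=
  ContDiff ℝ 1 U ∧ (∀ x, 0 ≤ U x) ∧
  (∀ x, Metric.infDist x (closure D) ≤ r₀ / 2 →
    U x = Metric.infDist x (closure D) ^ 2) ∧
  (∃ M : ℝ, ∀ x, ‖gradient U x‖ ≤ M) ∧
  LipschitzWith (Real.toNNReal (2 * L)) (gradient U)

/-- `ξ` is the (continuous) solution of the penalized equation
`ξ_t = x₀ + w_t − (m/2)∫₀^t ∇U(ξ_s) ds` on `[0,T]`. -/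
def IsPenalizedSol {d : ℕ} (U : Euc d → ℝ) (T : ℝ) (w : ℝ → Euc d) (x₀ : Euc d) (m : ℕ)
    (ξ : ℝ → Euc d) : Prop :=
  ContinuousOn ξ (Set.Icc 0 T) ∧
  ∀ t ∈ Set.Icc 0 T, ξ t = x₀ + w t - ((m : ℝ) / 2) • ∫ s in (0 : ℝ)..t, gradient U (ξ s)

/-- `w` is `α`-Hölder on `[0,T]` with constant `C`. -/
def IsHolder {d : ℕ} (w : ℝ → Euc d) (T α C : ℝ) : Prop :=
  ∀ s t : ℝ, 0 ≤ s → s ≤ t → t ≤ T → ‖w t - w s‖ ≤ C * (t - s) ^ α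

/-- The `α`-Hölder seminorm ‖w‖_α of `w` on `[0,T]`. -/
def holderSemi {d : ℕ} (w : ℝ → Euc d) (T α : ℝ) : ℝ :=
  sSup {c : ℝ | ∃ s t : ℝ, 0 ≤ s ∧ s < t ∧ t ≤ T ∧ c = ‖w t - w s‖ / (t - s) ^ α}

/-- ε_m^α(w) = (12 e^L / m^α) ‖w‖_α. -/
def epsm {d : ℕ} (w : ℝ → Euc d) (T α L : ℝ) (m : ℕ) : ℝ :=
  12 * Real.exp L / (m : ℝ) ^ α * holderSemi w T α

/-- ‖w‖_T = sup_{0 ≤ t ≤ T} |w_t|. -/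
def supNorm {d : ℕ} (w : ℝ → Euc d) (T : ℝ) : ℝ :=
  sSup ((fun t => ‖w t‖) '' Set.Icc 0 T)

/-- The oscillation Δ_{s,t}(f) = sup{ |f_{t₂} − f_{t₁}| : s ≤ t₁ < t₂ ≤ t }. -/
def osc {d : ℕ} (f : ℝ → Euc d) (s t : ℝ) : ℝ :=
  sSup {c : ℝ | ∃ u v : ℝ, s ≤ u ∧ u < v ∧ v ≤ t ∧ c = ‖f v - f u‖}

/-- `(ξ, φ)` solves the Skorokhod problem `ξ_t = x₀ + w_t + φ_t` on `[0,T]` for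
the domain `D`. -/
def IsSkorokhod {d : ℕ} (D : Set (Euc d)) (T : ℝ) (w : ℝ → Euc d) (x₀ : Euc d)
    (ξ φ : ℝ → Euc d) : Prop :=
  (∀ t ∈ Set.Icc 0 T, ξ t = x₀ + w t + φ t) ∧
  ContinuousOn ξ (Set.Icc 0 T) ∧ (∀ t ∈ Set.Icc 0 T, ξ t ∈ closure D) ∧
  ContinuousOn φ (Set.Icc 0 T) ∧ φ 0 = 0 ∧
  BoundedVariationOn φ (Set.Icc 0 T) ∧
  ∃ S : StieltjesFunction ℝ, (∀ t ∈ Set.Icc 0 T, S t = variationOnFromTo φ (Set.Icc 0 T) 0 t) ∧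
    ∃ nv : ℝ → Euc d, Measurable nv ∧
      (∀ t ∈ Set.Icc 0 T, φ t = ∫ s in Set.Icc 0 t, nv s ∂S.measure) ∧
      (∀ s ∈ Set.Icc 0 T, ξ s ∈ frontier D → nv s ∈ nsetAll D (ξ s)) ∧
      (∀ t ∈ Set.Icc 0 T, variationOnFromTo φ (Set.Icc 0 T) 0 t
          = (S.measure {s | s ∈ Set.Icc 0 t ∧ ξ s ∈ frontier D}).toReal)


open Topology NNReal

section DistanceSquared

variable {E : Type*} [NormedAddCommGroup E] [InnerProductSpace ℝ E] [CompleteSpace E]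

theorem gradient_eq_two_smul_sub_of_eventuallyEq_infDist_sq {K : Set E} {U : E → ℝ} {x p : E}
    (hp : p ∈ K) (hxp : infDist x K = dist x p) (hU : DifferentiableAt ℝ U x)
    (hUK : ∀ᶠ y in 𝓝 x, U y = infDist y K ^ 2) : gradient U x = (2 : ℝ) • (x - p) := by
  have hsq : HasFDerivAt (fun y => ‖y - p‖ ^ 2)
      (2 • (innerSL ℝ (x - p)).comp (ContinuousLinearMap.id ℝ E)) x := by
    simpa using ((hasFDerivAt_id x).sub_const p).norm_sq
  -- `U = infDist² ≤ ‖· - p‖²` near `x`, with equality at `x`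
  have hmin : IsLocalMin (fun y => ‖y - p‖ ^ 2 - U y) x := by
    filter_upwards [hUK] with y hy
    have hyp : infDist y K ≤ ‖y - p‖ := dist_eq_norm y p ▸ infDist_le_dist_of_mem hp
    rw [hy, hUK.self_of_nhds, hxp, dist_eq_norm, sub_self]
    nlinarith [infDist_nonneg (x := y) (s := K)]
  have hfd : fderiv ℝ U x = 2 • (innerSL ℝ (x - p)).comp (ContinuousLinearMap.id ℝ E) :=
    (sub_eq_zero.mp (hmin.hasFDerivAt_eq_zero (hsq.sub hU.hasFDerivAt))).symm
  refine ext_inner_right ℝ fun v => ?_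
  rw [inner_gradient_left, hfd]
  simp [real_inner_smul_left, inner_sub_left]

theorem norm_gradient_sq_eq_four_mul [ProperSpace E] {K : Set E} (hK : IsClosed K)
    (hKne : K.Nonempty) {U : E → ℝ} {x : E} (hU : DifferentiableAt ℝ U x)
    (hUK : ∀ᶠ y in 𝓝 x, U y = infDist y K ^ 2) : ‖gradient U x‖ ^ 2 = 4 * U x := by
  obtain ⟨p, hp, hxp⟩ := hK.exists_infDist_eq_dist hKne x
  rw [gradient_eq_two_smul_sub_of_eventuallyEq_infDist_sq hp hxp hU hUK, norm_smul,
    hUK.self_of_nhds, hxp, dist_eq_norm, Real.norm_two]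
  ring

end DistanceSquared

theorem ContinuousOn.exists_first_eq_of_lt_of_le {f : ℝ → ℝ} {a b c t : ℝ}
    (hf : ContinuousOn f (Icc a b)) (ha : f a < c) (ht : t ∈ Icc a b) (hct : c ≤ f t) :
    ∃ σ ∈ Ioc a t, f σ = c ∧ ∀ τ ∈ Ico a σ, f τ < c := by
  set S := Icc a t ∩ f ⁻¹' Ici c
  have hfS : ContinuousOn f (Icc a t) := hf.mono (Icc_subset_Icc_right ht.2)
  have hSne : S.Nonempty := ⟨t, ⟨ht.1, le_rfl⟩, hct⟩
  have hSbdd : BddBelow S := ⟨a, fun _ hτ => hτ.1.1⟩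
  obtain ⟨⟨haσ, hσt⟩, hcσ⟩ : sInf S ∈ S :=
    (hfS.preimage_isClosed_of_isClosed isClosed_Icc isClosed_Ici).csInf_mem hSne hSbdd
  have hbefore : ∀ τ ∈ Ico a (sInf S), f τ < c := fun τ hτ =>
    lt_of_not_ge fun hcτ => hτ.2.not_ge (csInf_le hSbdd ⟨⟨hτ.1, hτ.2.le.trans hσt⟩, hcτ⟩)
  have haσ' : a < sInf S := haσ.lt_of_ne fun h => (h ▸ ha).not_ge hcσ
  obtain ⟨τ, hτ, hfτ⟩ := intermediate_value_Icc haσ (hfS.mono (Icc_subset_Icc_right hσt))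
    ⟨ha.le, hcσ⟩
  have hτσ : τ = sInf S := hτ.2.eq_or_lt.resolve_right fun h => (hbefore τ ⟨hτ.1, h⟩).ne hfτ
  exact ⟨sInf S, ⟨haσ', hσt⟩, hτσ ▸ hfτ, hbefore⟩

section GradientFlow

variable {E : Type*} [NormedAddCommGroup E] [InnerProductSpace ℝ E] [CompleteSpace E]
  {U : E → ℝ} {η : ℝ → E} {k a b : ℝ}

theorem HasDerivWithinAt.comp_neg_gradient {s : Set ℝ} {τ : ℝ}
    (hU : DifferentiableAt ℝ U (η τ)) (hη : HasDerivWithinAt η (-k • gradient U (η τ)) s τ) :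
    HasDerivWithinAt (fun τ => U (η τ)) (-k * ‖gradient U (η τ)‖ ^ 2) s τ := by
  refine (hU.hasFDerivAt.comp_hasDerivWithinAt τ hη).congr_deriv ?_
  rw [map_smul, ← inner_gradient_left, real_inner_self_eq_norm_sq, smul_eq_mul]

theorem antitoneOn_exp_mul_comp_of_hasDerivWithinAt_neg_gradient {ρ : ℝ}
    (hU : Differentiable ℝ U)
    (hη : ∀ τ ∈ Icc a b, HasDerivWithinAt η (-k • gradient U (η τ)) (Icc a b) τ)
    (hPL : ∀ τ ∈ Ioo a b, ρ * U (η τ) ≤ k * ‖gradient U (η τ)‖ ^ 2) :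
    AntitoneOn (fun τ => Real.exp (ρ * (τ - a)) * U (η τ)) (Icc a b) := by
  have hexp (τ : ℝ) : HasDerivAt (fun τ => Real.exp (ρ * (τ - a)))
      (Real.exp (ρ * (τ - a)) * ρ) τ := by
    simpa using (((hasDerivAt_id τ).sub_const a).const_mul ρ).exp
  refine antitoneOn_of_hasDerivWithinAt_nonpos (convex_Icc a b) (fun τ hτ => ?_)
    (fun τ hτ => ?_) (f' := fun τ => Real.exp (ρ * (τ - a)) * ρ * U (η τ) +
      Real.exp (ρ * (τ - a)) * (-k * ‖gradient U (η τ)‖ ^ 2)) (fun τ hτ => ?_)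
  · exact (hexp τ).continuousAt.continuousWithinAt.mul
      (hU _ |>.continuousAt.comp_continuousWithinAt (hη τ hτ).continuousWithinAt)
  · rw [interior_Icc] at hτ ⊢
    exact ((hexp τ).hasDerivWithinAt.mul
      ((hη τ (Ioo_subset_Icc_self hτ)).comp_neg_gradient (hU _))).mono Ioo_subset_Icc_self
  · rw [interior_Icc] at hτ
    have := hPL τ hτ
    have := Real.exp_pos (ρ * (τ - a))
    nlinarith

theorem infDist_le_mul_exp_of_hasDerivWithinAt_neg_gradient [ProperSpace E] {K : Set E}
    (hK : IsClosed K) (hKne : K.Nonempty) (hU : Differentiable ℝ U) {r : ℝ}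
    (hUK : ∀ x, infDist x K ≤ r → U x = infDist x K ^ 2) (hk : 0 ≤ k) (hab : a ≤ b)
    (hη : ∀ τ ∈ Icc a b, HasDerivWithinAt η (-k • gradient U (η τ)) (Icc a b) τ)
    (hηa : infDist (η a) K < r) :
    infDist (η b) K ≤ infDist (η a) K * Real.exp (-(2 * k * (b - a))) := by
  have hdist : ContinuousOn (fun τ => infDist (η τ) K) (Icc a b) :=
    (continuous_infDist_pt K).comp_continuousOn fun τ hτ => (hη τ hτ).continuousWithinAt
  have hUa : U (η a) = infDist (η a) K ^ 2 := hUK _ hηa.le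
  have hregion : ∀ τ ∈ Icc a b, infDist (η τ) K < r := by
    have hdecr : AntitoneOn (fun τ => U (η τ)) (Icc a b) := by
      simpa using antitoneOn_exp_mul_comp_of_hasDerivWithinAt_neg_gradient (ρ := 0) hU hη
        fun τ _ => by rw [zero_mul]; positivity
    intro τ hτ
    by_contra! hrτ
    obtain ⟨σ, hσ, hσr, -⟩ := hdist.exists_first_eq_of_lt_of_le hηa hτ hrτ
    have hUσ : U (η σ) ≤ U (η a) := hdecr (left_mem_Icc.2 hab) ⟨hσ.1.le, hσ.2.trans hτ.2⟩ hσ.1.le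
    rw [hUK _ hσr.le, hσr, hUa] at hUσ
    nlinarith [infDist_nonneg (x := η a) (s := K)]
  have hPL : ∀ τ ∈ Icc a b, ‖gradient U (η τ)‖ ^ 2 = 4 * U (η τ) := fun τ hτ =>
    norm_gradient_sq_eq_four_mul hK hKne (hU _) <|
      eventually_of_mem ((isOpen_lt (continuous_infDist_pt K) continuous_const).mem_nhds
        (hregion τ hτ)) fun y hy => hUK y (le_of_lt hy)
  have hweighted := antitoneOn_exp_mul_comp_of_hasDerivWithinAt_neg_gradient (ρ := 4 * k) hU hη
    fun τ hτ => le_of_eq <| by rw [hPL τ (Ioo_subset_Icc_self hτ)]; ring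
  have hba := hweighted (left_mem_Icc.2 hab) (right_mem_Icc.2 hab) hab
  simp only [sub_self, mul_zero, Real.exp_zero, one_mul] at hba
  have hexp : Real.exp (4 * k * (b - a)) = Real.exp (2 * k * (b - a)) ^ 2 := by
    rw [← Real.exp_nat_mul]; ring_nf
  rw [hUa, hUK _ (hregion b (right_mem_Icc.2 hab)).le, hexp, ← mul_pow,
    pow_le_pow_iff_left₀ (mul_nonneg (Real.exp_pos _).le infDist_nonneg) infDist_nonneg
      two_ne_zero] at hba
  rw [Real.exp_neg, ← div_eq_mul_inv, le_div_iff₀ (Real.exp_pos _)]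
  linarith

end GradientFlow

section ODE

variable {E : Type*} [NormedAddCommGroup E] [NormedSpace ℝ E]

theorem gronwallBound_zero_mul (K B x : ℝ) :
    gronwallBound 0 K (K * B) x = B * (Real.exp (K * x) - 1) := by
  rcases eq_or_ne K 0 with rfl | hK
  · simp [gronwallBound_K0]
  · rw [gronwallBound_of_K_ne_0 hK]
    field_simp
    ring

theorem exists_hasDerivWithinAt_of_lipschitzWith_of_norm_le [CompleteSpace E] {F : E → E}
    {K : ℝ≥0} (hF : LipschitzWith K F) {M : ℝ} (hM : ∀ x, ‖F x‖ ≤ M) {a b : ℝ} (hab : a ≤ b)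
    (x₀ : E) : ∃ η : ℝ → E, η a = x₀ ∧ ∀ τ ∈ Icc a b, HasDerivWithinAt η (F (η τ)) (Icc a b) τ := by
  have hM₀ : 0 ≤ M := (norm_nonneg _).trans (hM x₀)
  have hpl : IsPicardLindelof (fun _ => F) (⟨a, left_mem_Icc.2 hab⟩ : Icc a b) x₀
      ⟨M * (b - a), mul_nonneg hM₀ (sub_nonneg.2 hab)⟩ 0 ⟨M, hM₀⟩ K :=
    .of_time_independent (fun x _ => hM x) hF.lipschitzOnWith (by simp [hab]; rfl)
  exact hpl.exists_eq_forall_mem_Icc_hasDerivWithinAt₀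

theorem norm_sub_le_mul_exp_of_hasDerivWithinAt_sub {F : E → E} {K : ℝ≥0}
    (hF : LipschitzWith K F) {ξ w η : ℝ → E} {a b B : ℝ} (hab : a ≤ b)
    (hξ : ∀ τ ∈ Icc a b, HasDerivWithinAt (fun s => ξ s - w s) (F (ξ τ)) (Icc a b) τ)
    (hη : ∀ τ ∈ Icc a b, HasDerivWithinAt η (F (η τ)) (Icc a b) τ) (hηa : η a = ξ a)
    (hw : ∀ τ ∈ Icc a b, ‖w τ - w a‖ ≤ B) :
    ‖ξ b - η b‖ ≤ B * Real.exp (K * (b - a)) := by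
  set f : ℝ → E := fun s => ξ s - w s + w a
  have hf : ∀ τ ∈ Icc a b, HasDerivWithinAt f (F (ξ τ)) (Icc a b) τ := fun τ hτ =>
    (hξ τ hτ).add_const (w a)
  have hξf : ∀ τ, ξ τ - f τ = w τ - w a := fun τ => by simp only [f]; abel
  have hfη := dist_le_of_approx_trajectories_ODE (v := fun _ => F) (fun _ => hF)
    (fun τ hτ => (hf τ hτ).continuousWithinAt)
    (fun τ hτ => (hf τ (Ico_subset_Icc_self hτ)).mono_of_mem_nhdsWithin
      (Icc_mem_nhdsGE_of_mem hτ))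
    (fun τ hτ => (hF.dist_le_mul _ _).trans <| by
      rw [dist_eq_norm, hξf]; exact mul_le_mul_of_nonneg_left (hw τ (Ico_subset_Icc_self hτ)) K.2)
    (fun τ hτ => (hη τ hτ).continuousWithinAt)
    (fun τ hτ => (hη τ (Ico_subset_Icc_self hτ)).mono_of_mem_nhdsWithin
      (Icc_mem_nhdsGE_of_mem hτ))
    (fun τ _ => (dist_self _).le) (δ := 0) (by simp [f, hηa]) b (right_mem_Icc.2 hab)
  rw [add_zero, gronwallBound_zero_mul, dist_eq_norm] at hfη
  calc ‖ξ b - η b‖ = ‖(f b - η b) + (ξ b - f b)‖ := by congr 1; abel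
    _ ≤ B * (Real.exp (K * (b - a)) - 1) + B := by
      rw [hξf]; exact norm_add_le_of_le hfη (hw b (right_mem_Icc.2 hab))
    _ = B * Real.exp (K * (b - a)) := by ring

end ODE

theorem mul_rpow_mul_exp_le {c α L k s : ℝ} (hc : 0 ≤ c) (hα : 0 ≤ α) (hL : 0 ≤ L) (hk : 0 < k)
    (hs₀ : 0 ≤ s) (hs : s ≤ 1 / k) :
    c * s ^ α * Real.exp (k * L * s) ≤ c * Real.exp L / k ^ α := by
  have hkL : k * L * s ≤ L := by
    calc k * L * s ≤ k * L * (1 / k) := by gcongr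
      _ = L := by field_simp
  calc c * s ^ α * Real.exp (k * L * s) ≤ c * (1 / k) ^ α * Real.exp L := by gcongr
    _ = c * Real.exp L / k ^ α := by
      rw [Real.div_rpow zero_le_one hk.le, Real.one_rpow]
      ring

section Penalized

variable {d : ℕ}

theorem holderSemi_nonneg (w : ℝ → Euc d) (T α : ℝ) : 0 ≤ holderSemi w T α :=
  Real.sSup_nonneg fun _ ⟨_, _, _, hst, _, hc⟩ =>
    hc ▸ div_nonneg (norm_nonneg _) (Real.rpow_nonneg (sub_nonneg.2 hst.le) _)

theorem IsHolder.holderSemi {w : ℝ → Euc d} {T α C : ℝ} (hw : IsHolder w T α C) :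
    IsHolder w T α (holderSemi w T α) := by
  intro s t hs hst htT
  rcases hst.eq_or_lt with rfl | hst
  · simpa using mul_nonneg (holderSemi_nonneg w T α) (Real.rpow_nonneg le_rfl α)
  have hpos : 0 < (t - s) ^ α := Real.rpow_pos_of_pos (sub_pos.2 hst) α
  have hbdd : BddAbove {c : ℝ | ∃ s t : ℝ, 0 ≤ s ∧ s < t ∧ t ≤ T ∧
      c = ‖w t - w s‖ / (t - s) ^ α} := ⟨C, fun _ ⟨s, t, hs, hst, htT, hc⟩ => hc ▸
    (div_le_iff₀ (Real.rpow_pos_of_pos (sub_pos.2 hst) α)).2 (hw s t hs hst.le htT)⟩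
  exact (div_le_iff₀ hpos).1 (le_csSup hbdd ⟨s, t, hs, hst, htT, rfl⟩)

theorem IsHolder.norm_sub_le_of_mem_Icc {w : ℝ → Euc d} {T α C : ℝ} (hw : IsHolder w T α C)
    (hα : 0 ≤ α) (hC : 0 ≤ C) {a b : ℝ} (ha : 0 ≤ a) (hbT : b ≤ T) :
    ∀ s ∈ Icc a b, ‖w s - w a‖ ≤ C * (b - a) ^ α := fun s hs =>
  (hw a s ha hs.1 (hs.2.trans hbT)).trans <| mul_le_mul_of_nonneg_left
    (Real.rpow_le_rpow (sub_nonneg.2 hs.1) (by linarith [hs.2]) hα) hC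

variable {D : Set (Euc d)} {r₀ L : ℝ} {U : Euc d → ℝ} {T : ℝ} {w : ℝ → Euc d} {x₀ : Euc d}
  {k : ℕ} {ξ : ℝ → Euc d}

theorem IsPenalizedSol.hasDerivWithinAt_sub (hξ : IsPenalizedSol U T w x₀ k ξ)
    (hU : Continuous (gradient U)) {τ : ℝ} (hτ : τ ∈ Icc 0 T) :
    HasDerivWithinAt (fun s => ξ s - w s) (-((k : ℝ) / 2) • gradient U (ξ τ)) (Icc 0 T) τ := by
  have hg : ContinuousOn (fun s => gradient U (ξ s)) (Icc 0 T) := hU.comp_continuousOn hξ.1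
  have : Fact (τ ∈ Icc 0 T) := ⟨hτ⟩
  have hP : HasDerivWithinAt (fun t => ∫ s in (0 : ℝ)..t, gradient U (ξ s)) (gradient U (ξ τ))
      (Icc 0 T) τ :=
    intervalIntegral.integral_hasDerivWithinAt_right
      (hg.mono (uIcc_subset_Icc (left_mem_Icc.2 (hτ.1.trans hτ.2)) hτ)).intervalIntegrable
      (hg.stronglyMeasurableAtFilter_nhdsWithin measurableSet_Icc τ) (hg τ hτ)
  refine (((hP.const_smul ((k : ℝ) / 2)).const_sub x₀).congr_of_mem (fun t ht => ?_) hτ).congr_deriv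
    (neg_smul _ _).symm
  rw [hξ.2 t ht]
  abel

theorem IsPenalizedSol.infDist_le_of_window (hDne : D.Nonempty) (hL : 0 ≤ L)
    (hU : IsPenalty D r₀ L U) (hξ : IsPenalizedSol U T w x₀ k ξ) {a b B : ℝ} (ha : 0 ≤ a)
    (hab : a ≤ b) (hbT : b ≤ T) (hw : ∀ τ ∈ Icc a b, ‖w τ - w a‖ ≤ B)
    (hξa : infDist (ξ a) (closure D) < r₀ / 2) :
    infDist (ξ b) (closure D) ≤
      infDist (ξ a) (closure D) * Real.exp (-(k * (b - a))) + B * Real.exp (k * L * (b - a)) := by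
  obtain ⟨hUC1, -, hUD, ⟨M, hM⟩, hLip⟩ := hU
  have hF := (lipschitzWith_smul (-((k : ℝ) / 2))).comp hLip
  obtain ⟨η, hηa, hη⟩ := exists_hasDerivWithinAt_of_lipschitzWith_of_norm_le hF
    (M := k / 2 * M) (fun x => by
      rw [Function.comp_apply, norm_smul, norm_neg, Real.norm_of_nonneg (by positivity)]
      exact mul_le_mul_of_nonneg_left (hM x) (by positivity)) hab (ξ a)
  have hdecay := infDist_le_mul_exp_of_hasDerivWithinAt_neg_gradient isClosed_closure
    hDne.closure (hUC1.differentiable one_ne_zero) hUD (by positivity) hab hη (hηa ▸ hξa)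
  have hclose := norm_sub_le_mul_exp_of_hasDerivWithinAt_sub hF hab
    (fun τ hτ => (hξ.hasDerivWithinAt_sub hLip.continuous ⟨ha.trans hτ.1, hτ.2.trans hbT⟩).mono
      (Icc_subset_Icc ha hbT)) hη hηa hw
  have hK : ((‖-((k : ℝ) / 2)‖₊ * (2 * L).toNNReal : ℝ≥0) : ℝ) = k * L := by
    rw [NNReal.coe_mul, coe_nnnorm, norm_neg, Real.norm_of_nonneg (by positivity),
      Real.coe_toNNReal _ (by positivity)]
    ring
  rw [hηa, show 2 * ((k : ℝ) / 2) * (b - a) = k * (b - a) by ring] at hdecay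
  rw [hK] at hclose
  calc infDist (ξ b) (closure D) ≤ infDist (η b) (closure D) + dist (ξ b) (η b) :=
        infDist_le_infDist_add_dist
    _ ≤ _ := add_le_add hdecay (dist_eq_norm (ξ b) (η b) ▸ hclose)

theorem IsPenalizedSol.infDist_lt_of_le_half (hDne : D.Nonempty) (hL : 0 ≤ L)
    (hU : IsPenalty D r₀ L U) (hk : 0 < k) (hξ : IsPenalizedSol U T w x₀ k ξ) {α c ε : ℝ}
    (hα : 0 ≤ α) (hc : 0 ≤ c) (hw : IsHolder w T α c) (hεr : ε ≤ r₀ / 2)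
    (herr : c * Real.exp L / k ^ α < ε / 2) {τ₀ : ℝ} (hτ₀ : 0 ≤ τ₀)
    (hξτ₀ : infDist (ξ τ₀) (closure D) ≤ ε / 2) {τ : ℝ} (hτ : τ ∈ Icc τ₀ T) :
    infDist (ξ τ) (closure D) < ε := by
  have hkpos : (0 : ℝ) < k := Nat.cast_pos.2 hk
  have hε : 0 < ε := by
    have : 0 ≤ c * Real.exp L / k ^ α := by positivity
    linarith
  by_contra! hετ
  have hcont : ContinuousOn (fun s => infDist (ξ s) (closure D)) (Icc τ₀ T) :=
    (continuous_infDist_pt _).comp_continuousOn (hξ.1.mono (Icc_subset_Icc_left hτ₀))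
  obtain ⟨σ, ⟨hτ₀σ, hστ⟩, hσε, hbefore⟩ :=
    hcont.exists_first_eq_of_lt_of_le (by linarith) hτ hετ
  obtain ⟨a, ⟨hτ₀a, haσ⟩, hσa, hstart⟩ : ∃ a ∈ Ico τ₀ σ, σ - a ≤ 1 / k ∧
      infDist (ξ a) (closure D) * Real.exp (-(k * (σ - a))) ≤ ε / 2 := by
    rcases le_total (σ - 1 / k) τ₀ with h | h
    · refine ⟨τ₀, ⟨le_rfl, hτ₀σ⟩, by linarith, ?_⟩
      exact (mul_le_of_le_one_right infDist_nonneg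
        (Real.exp_le_one_iff.2 (by nlinarith))).trans hξτ₀
    · refine ⟨σ - 1 / k, ⟨h, by simpa using hkpos⟩, by simp, ?_⟩
      -- a full window of length `1 / k` damps the distance by `e⁻¹ < 1 / 2`
      have hexp : Real.exp (-1) ≤ 1 / 2 := by
        rw [Real.exp_neg, ← one_div]
        exact one_div_le_one_div_of_le two_pos (by linarith [Real.add_one_le_exp 1])
      rw [sub_sub_cancel, mul_one_div_cancel hkpos.ne']
      nlinarith [hbefore (σ - 1 / k) ⟨h, by simpa using hkpos⟩,
        infDist_nonneg (x := ξ (σ - 1 / k)) (s := closure D)]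
  have hwin := hξ.infDist_le_of_window hDne hL hU (hτ₀.trans hτ₀a) haσ.le (hστ.trans hτ.2)
    (hw.norm_sub_le_of_mem_Icc hα hc (hτ₀.trans hτ₀a) (hστ.trans hτ.2))
    ((hbefore a ⟨hτ₀a, haσ⟩).trans_le hεr)
  have hnoise := mul_rpow_mul_exp_le hc hα hL hkpos (sub_nonneg.2 haσ.le) hσa
  linarith [herr]

end Penalized

theorem penalized_path_hits_inner_shell_first_general
    (d : ℕ) (D : Set (Euc d)) (hDne : D.Nonempty)
    (r₀ : ℝ)
    (L T α : ℝ) (hL : 0 < L) (hα : 0 < α)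
    (U : Euc d → ℝ) (hU : IsPenalty D r₀ L U)
    (w : ℝ → Euc d) (hHol : ∃ C : ℝ, IsHolder w T α C)
    (x₀ : Euc d)
    (m : ℕ) (hm : 1 ≤ m)
    (hε1 : 0 < epsm w T α L m) (hε2 : epsm w T α L m < r₀ / 2)
    (m' : ℕ) (hm' : m ≤ m')
    (ξ : ℝ → Euc d) (hξ : IsPenalizedSol U T w x₀ m' ξ)
    (u : ℝ) (hu0 : 0 < u)
    (hhit : Metric.infDist (ξ (u / (m' : ℝ))) (closure D) = epsm w T α L m / 2) :
    ∀ t ∈ Set.Icc u ((m' : ℝ) * T),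
      (∀ s ∈ Set.Icc u t,
        Metric.infDist (ξ (s / (m' : ℝ))) (closure D) ≠ epsm w T α L m / 3) →
      Metric.infDist (ξ (t / (m' : ℝ))) (closure D) < epsm w T α L m := by
  intro t ht _
  obtain ⟨C, hC⟩ := hHol
  have hm₀ : (0 : ℝ) < m := by exact_mod_cast hm
  have hmm' : (m : ℝ) ≤ m' := by exact_mod_cast hm'
  have hm'₀ : (0 : ℝ) < m' := hm₀.trans_le hmm'
  have herr : holderSemi w T α * Real.exp L / (m' : ℝ) ^ α < epsm w T α L m / 2 :=
    calc holderSemi w T α * Real.exp L / (m' : ℝ) ^ α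
        ≤ holderSemi w T α * Real.exp L / (m : ℝ) ^ α := by
          have := holderSemi_nonneg w T α
          gcongr
      _ = epsm w T α L m / 12 := by unfold epsm; ring
      _ < epsm w T α L m / 2 := by linarith
  exact hξ.infDist_lt_of_le_half hDne hL.le hU (by omega) hα.le (holderSemi_nonneg w T α)
    hC.holderSemi hε2.le herr (div_nonneg hu0.le hm'₀.le) hhit.le
    ⟨div_le_div_of_nonneg_right ht.1 hm'₀.le, (div_le_iff₀ hm'₀).2 (by linarith [ht.2])⟩

/-- the rescaled penalized path `ξ̃^{m'}_t = ξ^{m'}_{t/m'}`, once it hits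
`∂D_{ε/2}`, hits `∂D_{ε/3}` before hitting `∂D_ε`, where `ε = ε_m^α(w)`. -/
theorem penalized_path_hits_inner_shell_first
    (d : ℕ) (hd : 1 ≤ d) (D : Set (Euc d)) (hDne : D.Nonempty) (hDopen : IsOpen D)
    (r₀ δ β : ℝ) (hA : CondA D r₀) (hB : CondB D δ β)
    (L T α : ℝ) (hL : 0 < L) (hT : 0 < T) (hα : 0 < α) (hα2 : α < 1 / 2)
    (U : Euc d → ℝ) (hU : IsPenalty D r₀ L U)
    (w : ℝ → Euc d) (hw0 : w 0 = 0) (hHol : ∃ C : ℝ, IsHolder w T α C)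
    (x₀ : Euc d) (hx₀ : x₀ ∈ closure D)
    (m : ℕ) (hm : 1 ≤ m)
    (hε1 : 0 < epsm w T α L m) (hε2 : epsm w T α L m < r₀ / 2)
    (m' : ℕ) (hm' : m ≤ m')
    (ξ : ℝ → Euc d) (hξ : IsPenalizedSol U T w x₀ m' ξ)
    (u : ℝ) (hu0 : 0 < u) (hu1 : u < (m' : ℝ) * T)
    (hhit : Metric.infDist (ξ (u / (m' : ℝ))) (closure D) = epsm w T α L m / 2) :
    ∀ t ∈ Set.Icc u ((m' : ℝ) * T),
      (∀ s ∈ Set.Icc u t,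
        Metric.infDist (ξ (s / (m' : ℝ))) (closure D) ≠ epsm w T α L m / 3) →
      Metric.infDist (ξ (t / (m' : ℝ))) (closure D) < epsm w T α L m :=
  penalized_path_hits_inner_shell_first_general d D hDne r₀ L T α hL hα U hU w hHol x₀ m hm hε1 hε2
    m' hm' ξ hξ u hu0 hhit
end
end

section
/- Suppose D ⊂ ℝ^d is a nonempty open set satisfying Condition (A) and U is a penalty function for D with constant L. Let x ∈ ℝ^d satisfy 0 < dist(x, D̄) ≤ r₀/2, let x̄ be the unique nearest point to x in D̄, and let u ∈ ℝ. Define η_t := x̄ − (x̄ − x)·exp(−(t − u)) for t ≥ u. Then for every t ≥ u: (i) x̄ is the unique nearest point to η_t in D̄ and dist(η_t, D̄) = |η_t − x̄| = dist(x, D̄)·exp(−(t − u)); and (ii) η_t = x − (1/2)∫_u^t ∇U(η_s) ds. -/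
open Set Metric MeasureTheory Filter

noncomputable section

/-!
The ball `B(x, r)`, `r = dist(x, D̄)`, avoids `D̄` and touches it at `x̄`, so `x̄ ∈ ∂D` and
`n = (x̄ − x)/r` is an exterior normal at `x̄` of radius `r`; Condition (A) makes it one of radius
`r₀`, i.e. the ball of radius `r₀` centred at `x̄ − r₀ n` avoids `D̄`. Every point `x̄ − a n`,
`0 ≤ a < r₀`, of the segment towards that centre then has `x̄` as its unique nearest point in `D̄`,
at distance `a`, and `η_t` is such a point with `a = r e^{−(t−u)}`. Near `η_t` (for `t > u`) the
penalty `U = dist(·, D̄)²` lies below `|· − x̄|²` with contact at `η_t`, so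
`∇U(η_t) = 2(η_t − x̄) = 2 e^{−(t−u)} (x − x̄)`, and the integral equation reduces to
`∫_u^t e^{−(s−u)} ds = 1 − e^{−(t−u)}`.
-/

open Topology

section ExteriorBall

variable {E : Type*} [NormedAddCommGroup E] [NormedSpace ℝ E] {S : Set E} {p n : E} {R a : ℝ}

theorem le_dist_sub_smul_of_disjoint_ball (hS : Disjoint (ball (p - R • n) R) S)
    (hn : ‖n‖ = 1) (haR : a ≤ R) {y : E} (hy : y ∈ S) :
    a ≤ dist (p - a • n) y := by
  have hyc : R ≤ dist y (p - R • n) := not_lt.mp fun h => hS.ne_of_mem (mem_ball.mpr h) hy rfl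
  have hzc : dist (p - a • n) (p - R • n) = R - a := by
    rw [dist_sub_left, dist_eq_norm, ← sub_smul, norm_smul, hn, mul_one, Real.norm_eq_abs,
      abs_of_nonpos (by linarith)]
    ring
  linarith [dist_triangle y (p - a • n) (p - R • n), dist_comm y (p - a • n)]

theorem dist_sub_smul_left (hn : ‖n‖ = 1) (ha : 0 ≤ a) : dist (p - a • n) p = a := by
  rw [dist_eq_norm, sub_sub_cancel_left, norm_neg, norm_smul, hn, Real.norm_of_nonneg ha, mul_one]

theorem infDist_sub_smul_of_disjoint_ball (hS : Disjoint (ball (p - R • n) R) S)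
    (hn : ‖n‖ = 1) (hp : p ∈ S) (ha : 0 ≤ a) (haR : a ≤ R) :
    infDist (p - a • n) S = a := by
  refine le_antisymm ?_ ((le_infDist ⟨p, hp⟩).mpr fun y hy =>
    le_dist_sub_smul_of_disjoint_ball hS hn haR hy)
  calc infDist (p - a • n) S ≤ dist (p - a • n) p := infDist_le_dist_of_mem hp
    _ = a := dist_sub_smul_left hn ha

theorem eq_of_dist_sub_smul_eq_of_disjoint_ball [StrictConvexSpace ℝ E]
    (hS : Disjoint (ball (p - R • n) R) S) (hn : ‖n‖ = 1) (ha : 0 ≤ a) (haR : a < R)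
    {y : E} (hy : y ∈ S) (hdy : dist (p - a • n) y = a) : y = p := by
  set z := p - a • n
  have hyc : R ≤ ‖y - (p - R • n)‖ :=
    not_lt.mp fun h => hS.ne_of_mem (mem_ball_iff_norm.mpr h) hy rfl
  have hzc : z - (p - R • n) = (R - a) • n := by simp only [z, sub_smul]; abel
  have hyz : ‖y - z‖ = a := by rw [← dist_eq_norm, dist_comm, hdy]
  -- equality in the triangle inequality through `z` to the centre puts `y - z` on the ray of `n`
  have hray : SameRay ℝ (y - z) ((R - a) • n) := by
    refine sameRay_iff_norm_add.mpr (le_antisymm (norm_add_le _ _) ?_)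
    rw [← hzc, sub_add_sub_cancel, hyz, hzc, norm_smul, hn, mul_one, Real.norm_eq_abs,
      abs_of_pos (sub_pos.mpr haR)]
    linarith
  have hray' : SameRay ℝ (y - z) (a • n) :=
    hray.trans ((SameRay.sameRay_nonneg_smul_left n (sub_pos.mpr haR).le).nonneg_smul_right ha)
      fun h0 => by simp_all [(sub_pos.mpr haR).ne']
  have : y - z = a • n :=
    hray'.eq_of_norm_eq (by rw [hyz, norm_smul, hn, Real.norm_of_nonneg ha, mul_one])
  rw [← sub_add_cancel y z, this, add_sub_cancel]

theorem mem_frontier_of_dist_eq_infDist {s : Set E} {x y : E} (hy : y ∈ closure s)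
    (hxy : dist x y = infDist x (closure s)) (hpos : 0 < dist x y) : y ∈ frontier s := by
  refine ⟨hy, fun hint => ?_⟩
  have hyb : y ∈ closure (ball x (dist x y)) := by
    rw [closure_ball x hpos.ne']
    exact mem_closedBall'.mpr le_rfl
  obtain ⟨w, hwi, hwb⟩ := mem_closure_iff.mp hyb _ isOpen_interior hint
  rw [hxy] at hwb
  exact disjoint_ball_infDist.ne_of_mem hwb (subset_closure (interior_subset hwi)) rfl

end ExteriorBall

section

variable {d : ℕ} {D : Set (Euc d)}

theorem inv_smul_sub_mem_nset {x y : Euc d} (hxy : dist x y = infDist x (closure D))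
    (hpos : 0 < dist x y) : (dist x y)⁻¹ • (y - x) ∈ nset D y (dist x y) := by
  refine ⟨?_, ?_⟩
  · rw [norm_smul, norm_inv, Real.norm_of_nonneg hpos.le, ← dist_eq_norm',
      inv_mul_cancel₀ hpos.ne']
  · rw [smul_inv_smul₀ hpos.ne', sub_sub_cancel, ← Set.disjoint_iff_inter_eq_empty, hxy]
    exact disjoint_ball_infDist.mono_right subset_closure

theorem CondA.disjoint_ball_closure {r₀ r : ℝ} {y n : Euc d} (hA : CondA D r₀)
    (hy : y ∈ frontier D) (hr : 0 < r) (hn : n ∈ nset D y r) :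
    Disjoint (ball (y - r₀ • n) r₀) (closure D) := by
  have hn₀ : n ∈ nset D y r₀ := (hA.2 y hy).1 ▸ mem_biUnion (mem_Ioi.mpr hr) hn
  exact (Set.disjoint_iff_inter_eq_empty.mpr hn₀.2).closure_right isOpen_ball

end

theorem HasFDerivAt.eq_of_eventuallyLE_of_eq {E : Type*} [NormedAddCommGroup E]
    [NormedSpace ℝ E] {f g : E → ℝ} {f' g' : StrongDual ℝ E} {z : E} (hf : HasFDerivAt f f' z)
    (hg : HasFDerivAt g g' z) (hle : f ≤ᶠ[𝓝 z] g) (heq : f z = g z) : f' = g' := by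
  have hmin : IsLocalMin (g - f) z := hle.mono fun y hy => by simpa [heq] using hy
  exact (sub_eq_zero.mp (hmin.hasFDerivAt_eq_zero (hg.sub hf))).symm

theorem hasGradientAt_norm_sub_sq {F : Type*} [NormedAddCommGroup F] [InnerProductSpace ℝ F]
    [CompleteSpace F] (p z : F) : HasGradientAt (fun y => ‖y - p‖ ^ 2) ((2 : ℝ) • (z - p)) z := by
  refine hasGradientAt_iff_hasFDerivAt.mpr
    (((hasFDerivAt_id z).sub_const p).norm_sq.congr_fderiv ?_)
  ext w
  simp

theorem IsPenalty.gradient_eq {d : ℕ} {D : Set (Euc d)} {r₀ L : ℝ} {U : Euc d → ℝ}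
    (hU : IsPenalty D r₀ L U) {z p : Euc d} (hz : infDist z (closure D) < r₀ / 2)
    (hp : p ∈ closure D) (hzp : dist z p = infDist z (closure D)) :
    gradient U z = (2 : ℝ) • (z - p) := by
  have hU_le : ∀ y, infDist y (closure D) ≤ r₀ / 2 → U y ≤ ‖y - p‖ ^ 2 := fun y hy => by
    rw [hU.2.2.1 y hy, ← dist_eq_norm]
    exact pow_le_pow_left₀ infDist_nonneg (infDist_le_dist_of_mem hp) 2
  have hle : U ≤ᶠ[𝓝 z] fun y => ‖y - p‖ ^ 2 :=
    ((continuous_infDist_pt _).continuousAt.eventually_lt continuousAt_const hz).mono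
      fun y hy => hU_le y hy.le
  have heq : U z = ‖z - p‖ ^ 2 := by rw [hU.2.2.1 z hz.le, ← dist_eq_norm, hzp]
  have hU' := hasGradientAt_iff_hasFDerivAt.mp (hU.1.differentiable one_ne_zero z).hasGradientAt
  have hsq := hasGradientAt_iff_hasFDerivAt.mp (hasGradientAt_norm_sub_sq p z)
  exact (hasGradientAt_iff_hasFDerivAt.mpr
    (hU'.eq_of_eventuallyLE_of_eq hsq hle heq ▸ hU')).gradient

theorem integral_exp_neg_sub (u t : ℝ) :
    ∫ s in u..t, Real.exp (-(s - u)) = 1 - Real.exp (-(t - u)) := by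
  simp only [neg_sub]
  rw [intervalIntegral.integral_comp_sub_left (fun s => Real.exp s), integral_exp, sub_self,
    Real.exp_zero]

theorem exponential_curve_solves_penalized_ode_general
    (d : ℕ) (D : Set (Euc d))
    (r₀ L : ℝ) (hA : CondA D r₀)
    (U : Euc d → ℝ) (hU : IsPenalty D r₀ L U)
    (x : Euc d) (hx1 : 0 < Metric.infDist x (closure D))
    (hx2 : Metric.infDist x (closure D) ≤ r₀ / 2)
    (xb : Euc d) (hxb : xb ∈ closure D ∧ dist x xb = Metric.infDist x (closure D))
    (u : ℝ) (η : ℝ → Euc d)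
    (hη : ∀ t : ℝ, η t = xb - Real.exp (-(t - u)) • (xb - x)) :
    ∀ t : ℝ, u ≤ t →
      (xb ∈ closure D ∧ dist (η t) xb = Metric.infDist (η t) (closure D) ∧
        (∀ y : Euc d, y ∈ closure D ∧
            dist (η t) y = Metric.infDist (η t) (closure D) → y = xb) ∧
        Metric.infDist (η t) (closure D)
          = Metric.infDist x (closure D) * Real.exp (-(t - u))) ∧
      η t = x - (1 / 2 : ℝ) • ∫ s in u..t, gradient U (η s) := by
  obtain ⟨hxbD, hxxb⟩ := hxb
  set r := infDist x (closure D)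
  have hnormal := inv_smul_sub_mem_nset hxxb (hxxb ▸ hx1)
  rw [hxxb] at hnormal
  set n := r⁻¹ • (xb - x)
  have hball : Disjoint (ball (xb - r₀ • n) r₀) (closure D) :=
    hA.disjoint_ball_closure (mem_frontier_of_dist_eq_infDist hxbD hxxb (hxxb ▸ hx1)) hx1 hnormal
  have hηn : ∀ s, η s = xb - (Real.exp (-(s - u)) * r) • n := fun s => by
    rw [hη, mul_smul, smul_inv_smul₀ hx1.ne']
  have hle : ∀ s, u ≤ s → Real.exp (-(s - u)) * r ≤ r := fun s hs =>
    mul_le_of_le_one_left hx1.le (Real.exp_le_one_iff.mpr (by linarith))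
  have hinf : ∀ s, u ≤ s → infDist (η s) (closure D) = Real.exp (-(s - u)) * r := fun s hs =>
    hηn s ▸ infDist_sub_smul_of_disjoint_ball hball hnormal.1 hxbD (by positivity)
      ((hle s hs).trans (by linarith))
  have hdist : ∀ s, u ≤ s → dist (η s) xb = Real.exp (-(s - u)) * r := fun s hs =>
    hηn s ▸ dist_sub_smul_left hnormal.1 (by positivity)
  intro t ht
  refine ⟨⟨hxbD, (hdist t ht).trans (hinf t ht).symm, fun y ⟨hy, hdy⟩ => ?_,
    (hinf t ht).trans (mul_comm _ _)⟩, ?_⟩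
  · rw [hinf t ht, hηn t] at hdy
    exact eq_of_dist_sub_smul_eq_of_disjoint_ball hball hnormal.1 (by positivity)
      ((hle t ht).trans_lt (by linarith)) hy hdy
  have hgrad : ∀ s ∈ Ioc u t, gradient U (η s) = (2 * Real.exp (-(s - u))) • (x - xb) := by
    intro s hs
    have hs_lt : infDist (η s) (closure D) < r₀ / 2 := by
      rw [hinf s hs.1.le]
      exact (mul_lt_of_lt_one_left hx1 (Real.exp_lt_one_iff.mpr (by linarith [hs.1]))).trans_le
        hx2
    rw [hU.gradient_eq hs_lt hxbD ((hdist s hs.1.le).trans (hinf s hs.1.le).symm), hη]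
    module
  have hint : ∫ s in u..t, gradient U (η s) = (2 * (1 - Real.exp (-(t - u)))) • (x - xb) := by
    rw [intervalIntegral.integral_congr_ae (ae_of_all _ fun s hs => hgrad s (uIoc_of_le ht ▸ hs)),
      intervalIntegral.integral_smul_const, intervalIntegral.integral_const_mul,
      integral_exp_neg_sub]
  rw [hint, hη]
  module

/-- the explicit exponential curve `η_t = x̄ − (x̄ − x)e^{−(t−u)}`
solves the autonomous penalized equation `η_t = x − (1/2)∫_u^t ∇U(η_s) ds`, its
nearest point in `D̄` is always `x̄`, and its distance to `D̄` decays exponentially. -/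
theorem exponential_curve_solves_penalized_ode
    (d : ℕ) (hd : 1 ≤ d) (D : Set (Euc d)) (hDne : D.Nonempty) (hDopen : IsOpen D)
    (r₀ L : ℝ) (hA : CondA D r₀) (hL : 0 < L)
    (U : Euc d → ℝ) (hU : IsPenalty D r₀ L U)
    (x : Euc d) (hx1 : 0 < Metric.infDist x (closure D))
    (hx2 : Metric.infDist x (closure D) ≤ r₀ / 2)
    (xb : Euc d) (hxb : xb ∈ closure D ∧ dist x xb = Metric.infDist x (closure D))
    (u : ℝ) (η : ℝ → Euc d)
    (hη : ∀ t : ℝ, η t = xb - Real.exp (-(t - u)) • (xb - x)) :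
    ∀ t : ℝ, u ≤ t →
      (xb ∈ closure D ∧ dist (η t) xb = Metric.infDist (η t) (closure D) ∧
        (∀ y : Euc d, y ∈ closure D ∧
            dist (η t) y = Metric.infDist (η t) (closure D) → y = xb) ∧
        Metric.infDist (η t) (closure D)
          = Metric.infDist x (closure D) * Real.exp (-(t - u))) ∧
      η t = x - (1 / 2 : ℝ) • ∫ s in u..t, gradient U (η s) :=
  exponential_curve_solves_penalized_ode_general d D r₀ L hA U hU x hx1 hx2 xb hxb u η hη

end
end
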